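/- arXiv:1510.02847 — 5 statements merged into one kernel-verified Lean document; each statement's English description precedes it below -/
import Mathlib

section
/- Under the stated setting and Invariants 1 and 2, every classifier h ∈ H with err_D(h) − err_D(h*) ≤ ε/2 satisfies err(h, Ŝ) − err(ĥ, Ŝ) ≤ 3ε/4. -/
/-
Let `Δ = err(h, Ŝ) - err(ĥ, Ŝ) ≥ 0`. Invariant 1 (applied to `ĥ` and `h`) bounds `Δ` by the excess
error of `h` over `ĥ` on `S` plus `ε/16`, and Invariant 2 bounds the latter by the true excess error
`≤ ε/2` plus `σ + √(σ ρ_S(h, ĥ))`. Since `ρ_S(h, ĥ) ≤ err(h, Ŝ) + err(ĥ, Ŝ) = Δ + 2 err(ĥ, Ŝ)`,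
AM-GM gives `√(σ ρ) ≤ 2σ + Δ/8 + 2√(σ err(ĥ, Ŝ))`, so `7Δ/8 ≤ 9ε/16 + 3ε/512` and `Δ ≤ 3ε/4`.
-/

open MeasureTheory

/-- Empirical error of a classifier (labels encoded as `Bool`, standing for `{-1,+1}`)
on a finite labeled dataset: the fraction of examples it misclassifies. -/
noncomputable def empErr {X : Type*} (h : X → Bool) (S : List (X × Bool)) : ℝ :=
  (S.countP (fun p => h p.1 != p.2) : ℝ) / S.length

/-- Empirical disagreement of two classifiers on a finite list of points. -/
noncomputable def empDis {X : Type*} (h h' : X → Bool) (xs : List X) : ℝ :=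
  (xs.countP (fun x => h x != h' x) : ℝ) / xs.length

/-- True error of a classifier under a labeled data distribution `D`. -/
noncomputable def trueErr {X : Type*} [MeasurableSpace X]
    (D : Measure (X × Bool)) (h : X → Bool) : ℝ :=
  (D {p | h p.1 ≠ p.2}).toReal

theorem List.countP_le_countP_add_countP {α : Type*} {p q r : α → Bool} {l : List α}
    (h : ∀ a ∈ l, p a = true → q a = true ∨ r a = true) :
    l.countP p ≤ l.countP q + l.countP r := by
  induction l with
  | nil => simp
  | cons a l ih =>
    have hl := ih fun b hb => h b (List.mem_cons_of_mem a hb)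
    have ha := h a List.mem_cons_self
    simp only [List.countP_cons]
    split_ifs <;> simp_all <;> omega

lemma empErr_nonneg {X : Type*} (h : X → Bool) (S : List (X × Bool)) : 0 ≤ empErr h S := by
  unfold empErr
  positivity

lemma empDis_le_empErr_add_empErr {X : Type*} (h h' : X → Bool) (xs : List X) (ys : List Bool)
    (hlen : xs.length ≤ ys.length) :
    empDis h h' xs ≤ empErr h (xs.zip ys) + empErr h' (xs.zip ys) := by
  have hzip_length : (xs.zip ys).length = xs.length := by
    rw [List.length_zip, min_eq_left hlen]
  have hcount : xs.countP (fun x => h x != h' x)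
      = (xs.zip ys).countP (fun p => h p.1 != h' p.1) := by
    conv_lhs => rw [← List.map_fst_zip hlen]
    rw [List.countP_map]
    rfl
  have htriangle : (xs.zip ys).countP (fun p => h p.1 != h' p.1)
      ≤ (xs.zip ys).countP (fun p => h p.1 != p.2)
        + (xs.zip ys).countP (fun p => h' p.1 != p.2) :=
    List.countP_le_countP_add_countP fun p _ => by
      cases h p.1 <;> cases h' p.1 <;> cases p.2 <;> simp
  unfold empDis empErr
  rw [hcount, hzip_length, ← add_div]
  gcongr
  exact_mod_cast htriangle

/- AM-GM on `σ Δ`; the term `σ e` stays under the root, since only `√(σ e)` is known to be small. -/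
lemma sqrt_mul_add_le {σ Δ e : ℝ} (hσ : 0 ≤ σ) (hΔ : 0 ≤ Δ) (he : 0 ≤ e) :
    √(σ * (Δ + 2 * e)) ≤ 2 * σ + Δ / 8 + 2 * √(σ * e) := by
  have hroot := Real.sq_sqrt (mul_nonneg hσ he)
  have hroot_nonneg := Real.sqrt_nonneg (σ * e)
  rw [Real.sqrt_le_left (by positivity)]
  nlinarith [sq_nonneg (2 * σ - Δ / 8), mul_nonneg (by positivity : 0 ≤ 2 * σ + Δ / 8) hroot_nonneg]

theorem stmt_1_general {X : Type*} [MeasurableSpace X]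
    (D : Measure (X × Bool))
    (H : Set (X → Bool))
    (hstar : X → Bool)
    (hstaropt : ∀ h ∈ H, trueErr D hstar ≤ trueErr D h)
    (xs : List X) (ys yhs : List Bool)
    (hlen' : yhs.length = xs.length)
    (hherm : X → Bool) (hhhermH : hherm ∈ H)
    (hhhermopt : ∀ h ∈ H, empErr hherm (xs.zip yhs) ≤ empErr h (xs.zip yhs))
    (ε σ : ℝ) (hε : ε ∈ Set.Ioc (0:ℝ) 1) (hσ : 0 ≤ σ)
    -- Invariant 1 (approximate favorable bias)
    (inv1 : ∀ h ∈ H, ∀ h' ∈ H, trueErr D h' - trueErr D hstar ≤ ε →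
      empErr h (xs.zip ys) - empErr h' (xs.zip ys) ≤
        empErr h (xs.zip yhs) - empErr h' (xs.zip yhs) + ε / 16)
    -- Invariant 2 (concentration)
    (inv2a : ∀ h ∈ H, ∀ h' ∈ H,
      |(empErr h (xs.zip ys) - empErr h' (xs.zip ys)) - (trueErr D h - trueErr D h')|
        ≤ σ + Real.sqrt (σ * empDis h h' xs))
    (inv2b : σ + Real.sqrt (σ * empErr hherm (xs.zip yhs)) ≤ ε / 512) :
    ∀ h ∈ H, trueErr D h - trueErr D hstar ≤ ε / 2 →
      empErr h (xs.zip yhs) - empErr hherm (xs.zip yhs) ≤ 3 * ε / 4 := by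
  intro h hH hexcess
  set e := empErr hherm (xs.zip yhs)
  set Δ := empErr h (xs.zip yhs) - e
  have hΔ : 0 ≤ Δ := sub_nonneg.2 (hhhermopt h hH)
  have hbias := inv1 hherm hhhermH h hH (by linarith [hε.1])
  have hconc := (abs_le.mp (inv2a h hH hherm hhhermH)).2
  have hstar_le := hstaropt hherm hhhermH
  have hdis : empDis h hherm xs ≤ Δ + 2 * e := by
    linarith [empDis_le_empErr_add_empErr h hherm xs yhs hlen'.ge]
  have hroot : √(σ * empDis h hherm xs) ≤ 2 * σ + Δ / 8 + 2 * √(σ * e) :=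
    (Real.sqrt_le_sqrt (mul_le_mul_of_nonneg_left hdis hσ)).trans
      (sqrt_mul_add_le hσ hΔ (empErr_nonneg _ _))
  linarith [Real.sqrt_nonneg (σ * e)]

/-- Lemma "low true excess error implies low empirical excess error":
under Invariants 1 and 2, any `h ∈ H` with true excess error at most `ε/2`
has empirical excess error on `Ŝ` at most `3ε/4`. -/
theorem stmt_1 {X : Type*} [MeasurableSpace X]
    (D : Measure (X × Bool)) [IsProbabilityMeasure D]
    (H : Set (X → Bool)) (hHmeas : ∀ h ∈ H, Measurable h)
    (hstar : X → Bool) (hstarH : hstar ∈ H)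
    (hstaropt : ∀ h ∈ H, trueErr D hstar ≤ trueErr D h)
    (xs : List X) (ys yhs : List Bool)
    (hlen : ys.length = xs.length) (hlen' : yhs.length = xs.length)
    (hherm : X → Bool) (hhhermH : hherm ∈ H)
    (hhhermopt : ∀ h ∈ H, empErr hherm (xs.zip yhs) ≤ empErr h (xs.zip yhs))
    (ε σ : ℝ) (hε : ε ∈ Set.Ioc (0:ℝ) 1) (hσ : 0 ≤ σ)
    -- Invariant 1 (approximate favorable bias)
    (inv1 : ∀ h ∈ H, ∀ h' ∈ H, trueErr D h' - trueErr D hstar ≤ ε →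
      empErr h (xs.zip ys) - empErr h' (xs.zip ys) ≤
        empErr h (xs.zip yhs) - empErr h' (xs.zip yhs) + ε / 16)
    -- Invariant 2 (concentration)
    (inv2a : ∀ h ∈ H, ∀ h' ∈ H,
      |(empErr h (xs.zip ys) - empErr h' (xs.zip ys)) - (trueErr D h - trueErr D h')|
        ≤ σ + Real.sqrt (σ * empDis h h' xs))
    (inv2b : σ + Real.sqrt (σ * empErr hherm (xs.zip yhs)) ≤ ε / 512) :
    ∀ h ∈ H, trueErr D h - trueErr D hstar ≤ ε / 2 →
      empErr h (xs.zip yhs) - empErr hherm (xs.zip yhs) ≤ 3 * ε / 4 :=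
  stmt_1_general D H hstar hstaropt xs ys yhs hlen' hherm hhhermH hhhermopt ε σ hε hσ inv1 inv2a
    inv2b
end

section
/- Let d ≥ 1 be a real number and δ, ε ∈ (0, 1). Then there exists an integer n with 2 ≤ n ≤ (64/ε)·(d·ln(512/ε) + ln(24/δ)) such that σ(n, δ/(log₂ n · (log₂ n + 1))) ≤ ε. -/
/-!
Take `n = ⌊(64/ε)·A⌋₊` with `A = d·ln(512/ε) + ln(24/δ)`, so that `εn ≥ 64A - 1`. Since
`2e·64 ≤ 512`, both `2en/d` and `n` are at most `512/ε` times `A/d`, resp. `A`, and `ln a ≤ a/2`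
makes the leftover logarithm linear in `A`. The correction `ln(log₂ n (log₂ n + 1)) ≤ 2 log₂ n`
costs only `3 ln n`, and the total stays below `64A - 1`.
-/

/-- The generalization-error term `σ(n, δ') = (8/n)·(2d·ln(2en/d) + ln(24/δ'))`. -/
noncomputable def sigmaVC (d : ℝ) (n : ℕ) (δ' : ℝ) : ℝ :=
  (8 / n) * (2 * d * Real.log (2 * Real.exp 1 * n / d) + Real.log (24 / δ'))

open Real

lemma Real.log_le_half_self {a : ℝ} (ha : 0 < a) : log a ≤ a / 2 := by
  have h := log_le_sub_one_of_pos (half_pos ha)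
  rw [log_div ha.ne' two_ne_zero] at h
  linarith [log_two_lt_d9]

lemma Real.one_le_log_of_three_le {t : ℝ} (ht : 3 ≤ t) : 1 ≤ log t := by
  rw [le_log_iff_exp_le (by linarith)]
  linarith [exp_one_lt_three]

lemma Real.log_le_log_add_half_of_le_mul {t b a : ℝ} (ht : 0 < t) (hb : 0 < b) (ha : 0 < a)
    (h : t ≤ b * a) : log t ≤ log b + a / 2 :=
  calc log t ≤ log (b * a) := log_le_log ht h
    _ = log b + log a := log_mul hb.ne' ha.ne'
    _ ≤ log b + a / 2 := by gcongr; exact log_le_half_self ha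

lemma Real.log_div_div_mul {c δ a b : ℝ} (hc : c ≠ 0) (hδ : δ ≠ 0) (ha : a ≠ 0) (hb : b ≠ 0) :
    log (c / (δ / (a * b))) = log (c / δ) + (log a + log b) := by
  rw [div_div_eq_mul_div, mul_div_right_comm, log_mul (div_ne_zero hc hδ) (mul_ne_zero ha hb),
    log_mul ha hb]

lemma Real.log_logb_two_add_log_logb_two_add_one_le {t : ℝ} (ht : 1 < t) :
    log (logb 2 t) + log (logb 2 t + 1) ≤ 3 * log t := by
  have hL : 0 < logb 2 t := logb_pos one_lt_two ht
  have hL_le : logb 2 t ≤ 3 / 2 * log t := by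
    rw [logb, div_le_iff₀ (log_pos one_lt_two)]
    nlinarith [log_two_gt_d9, log_pos ht]
  linarith [log_le_sub_one_of_pos hL, log_le_sub_one_of_pos (by linarith : 0 < logb 2 t + 1)]

lemma sigmaVC_le {d δ ε : ℝ} {n : ℕ} (hd : 1 ≤ d) (hδ : 0 < δ) (hδ1 : δ ≤ 1) (hε : 0 < ε)
    (hε1 : ε ≤ 1) (hn : 2 ≤ n)
    (hnN : (n : ℝ) ≤ 64 / ε * (d * log (512 / ε) + log (24 / δ)))
    (hNn : 64 / ε * (d * log (512 / ε) + log (24 / δ)) ≤ n + 1) :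
    sigmaVC d n (δ / (logb 2 n * (logb 2 n + 1))) ≤ ε := by
  set x := log (512 / ε)
  set y := log (24 / δ)
  set A := d * x + y
  have hx : 1 ≤ x := one_le_log_of_three_le (by rw [le_div_iff₀ hε]; linarith)
  have hy : 1 ≤ y := one_le_log_of_three_le (by rw [le_div_iff₀ hδ]; linarith)
  have hdx : x ≤ d * x := by nlinarith
  have hA : 0 < A := by positivity
  have hn1 : (1 : ℝ) < n := by exact_mod_cast hn
  have hn0 : (0 : ℝ) < n := by linarith
  have hlog_n : log n ≤ x + A / 2 :=
    log_le_log_add_half_of_le_mul hn0 (by positivity) hA <| hnN.trans <| by gcongr; norm_num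
  have hlog_arg : d * log (2 * exp 1 * n / d) ≤ d * x + A / 2 := by
    have h : log (2 * exp 1 * n / d) ≤ x + A / d / 2 := by
      refine log_le_log_add_half_of_le_mul (by positivity) (by positivity) (by positivity) ?_
      rw [← mul_div_assoc]
      refine div_le_div_of_nonneg_right ?_ (by linarith)
      calc 2 * exp 1 * n ≤ 2 * exp 1 * (64 / ε * A) := by gcongr
        _ = 128 * exp 1 * (A / ε) := by ring
        _ ≤ 512 * (A / ε) := by gcongr; linarith [exp_one_lt_d9]
        _ = 512 / ε * A := by ring
    calc d * log (2 * exp 1 * n / d) ≤ d * (x + A / d / 2) := by gcongr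
      _ = d * x + A / 2 := by field_simp
  have hεn : 64 * A - 1 ≤ ε * n := by
    have h : 64 * A = ε * (64 / ε * A) := by field_simp
    nlinarith
  have hL : 0 < logb 2 n := logb_pos one_lt_two hn1
  rw [sigmaVC, log_div_div_mul (by norm_num) hδ.ne' hL.ne' (by linarith), div_mul_eq_mul_div,
    div_le_iff₀ hn0]
  linarith [log_logb_two_add_log_logb_two_add_one_le hn1]

/-- Fact 1: the minimum `n` with `σ(n, δ/(log₂ n (log₂ n + 1))) ≤ ε` is at most
`(64/ε)(d ln(512/ε) + ln(24/δ))`. -/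
theorem stmt_4 (d δ ε : ℝ) (hd : 1 ≤ d) (hδ : δ ∈ Set.Ioo (0:ℝ) 1)
    (hε : ε ∈ Set.Ioo (0:ℝ) 1) :
    ∃ n : ℕ, 2 ≤ n ∧
      (n : ℝ) ≤ (64 / ε) * (d * Real.log (512 / ε) + Real.log (24 / δ)) ∧
      sigmaVC d n (δ / (Real.logb 2 n * (Real.logb 2 n + 1))) ≤ ε := by
  obtain ⟨hδ0, hδ1⟩ := hδ
  obtain ⟨hε0, hε1⟩ := hε
  set N := 64 / ε * (d * log (512 / ε) + log (24 / δ))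
  have hN : 2 ≤ N := by
    have hx : 0 ≤ log (512 / ε) := log_nonneg (by rw [le_div_iff₀ hε0]; linarith)
    have hy : 1 ≤ log (24 / δ) := one_le_log_of_three_le (by rw [le_div_iff₀ hδ0]; linarith)
    calc (2 : ℝ) ≤ 64 * 1 := by norm_num
      _ ≤ 64 / ε * (d * log (512 / ε) + log (24 / δ)) := by
        gcongr
        · rw [le_div_iff₀ hε0]; linarith
        · nlinarith
  refine ⟨⌊N⌋₊, Nat.le_floor (by exact_mod_cast hN), Nat.floor_le (by linarith), ?_⟩
  exact sigmaVC_le hd hδ0 hδ1.le hε0 hε1.le (Nat.le_floor (by exact_mod_cast hN))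
    (Nat.floor_le (by linarith)) (Nat.lt_floor_add_one N).le
end

section
/- Let p ∈ (0, 1], δ ∈ (0, 1), and let (p̂_i)_{i≥1} be a sequence of real numbers in [0, 1] satisfying |p̂_i − p| ≤ √((4/2^i) · ln(4 · 2^i / δ)) for all integers i ≥ 1. Then: (a) there exists an integer i ≥ 1 such that √((4/2^i) · ln(4 · 2^i / δ)) ≤ p̂_i / 3; and (b) for every integer i ≥ 1 satisfying √((4/2^i) · ln(4 · 2^i / δ)) ≤ p̂_i / 3, the estimate p̂ := 2p̂_i / 3 satisfies p̂ ≤ p ≤ 2p̂. -/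
/-!
The radius `εᵢ = √(4 log(4·2ⁱ/δ) / 2ⁱ)` is of order `√(i / 2ⁱ)`, so it tends to `0`; hence
`εᵢ ≤ p/4` for large `i`, and then `p̂ᵢ ≥ p - εᵢ ≥ 3p/4` makes the stopping rule `εᵢ ≤ p̂ᵢ/3` hold.
Whenever the rule holds, `|p̂ᵢ - p| ≤ p̂ᵢ/3` places `p` between `2p̂ᵢ/3` and `4p̂ᵢ/3`.
-/

open Filter Topology Real

lemma tendsto_log_const_mul_div_atTop (c : ℝ) :
    Tendsto (fun x => log (c * x) / x) atTop (𝓝 0) := by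
  rcases eq_or_ne c 0 with rfl | hc
  · simp
  have h := (tendsto_const_nhds (x := log c)).div_atTop tendsto_id |>.add
    isLittleO_log_id_atTop.tendsto_div_nhds_zero
  rw [add_zero] at h
  refine h.congr' ?_
  filter_upwards [eventually_gt_atTop 0] with x hx
  rw [log_mul hc hx.ne', add_div, id]

noncomputable def concentrationRadius (δ : ℝ) (i : ℕ) : ℝ :=
  √((4 / 2 ^ i) * log (4 * 2 ^ i / δ))

lemma tendsto_concentrationRadius_atTop (δ : ℝ) :
    Tendsto (concentrationRadius δ) atTop (𝓝 0) := by
  have h := ((tendsto_log_const_mul_div_atTop (4 / δ)).comp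
    (tendsto_pow_atTop_atTop_of_one_lt one_lt_two)).const_mul 4 |>.sqrt
  rw [mul_zero, sqrt_zero] at h
  refine h.congr fun i => ?_
  simp only [concentrationRadius, Function.comp_apply]
  congr 1
  rw [mul_div_right_comm 4]
  ring

lemma le_div_three_of_abs_sub_le {q p ε : ℝ} (h : |q - p| ≤ ε) (hε : ε ≤ p / 4) :
    ε ≤ q / 3 := by
  linarith [(abs_le.mp h).1]

lemma bounds_of_abs_sub_le_div_three {q p : ℝ} (h : |q - p| ≤ q / 3) :
    2 * q / 3 ≤ p ∧ p ≤ 2 * (2 * q / 3) := by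
  obtain ⟨h₁, h₂⟩ := abs_le.mp h
  constructor <;> linarith

theorem stmt_6_general (p δ : ℝ) (hp : p ∈ Set.Ioc (0:ℝ) 1)
    (phat : ℕ → ℝ)
    (hconc : ∀ i : ℕ, 1 ≤ i →
      |phat i - p| ≤ Real.sqrt ((4 / 2 ^ i) * Real.log (4 * 2 ^ i / δ))) :
    (∃ i : ℕ, 1 ≤ i ∧
        Real.sqrt ((4 / 2 ^ i) * Real.log (4 * 2 ^ i / δ)) ≤ phat i / 3) ∧
    (∀ i : ℕ, 1 ≤ i →
        Real.sqrt ((4 / 2 ^ i) * Real.log (4 * 2 ^ i / δ)) ≤ phat i / 3 →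
        2 * phat i / 3 ≤ p ∧ p ≤ 2 * (2 * phat i / 3)) := by
  refine ⟨?_, fun i hi hstop => bounds_of_abs_sub_le_div_three ((hconc i hi).trans hstop)⟩
  have hsmall : ∀ᶠ i in atTop, concentrationRadius δ i ≤ p / 4 :=
    (tendsto_concentrationRadius_atTop δ).eventually (ge_mem_nhds (by linarith [hp.1]))
  obtain ⟨i, hi, hεi⟩ := ((eventually_ge_atTop 1).and hsmall).exists
  exact ⟨i, hi, le_div_three_of_abs_sub_le (hconc i hi) hεi⟩

/-- Deterministic correctness of the adaptive doubling procedure for estimating the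
bias of a coin: on the concentration event, (a) the stopping condition is eventually
met, and (b) whenever it is met, the returned estimate `p̂ = 2p̂ᵢ/3` satisfies
`p̂ ≤ p ≤ 2p̂`. -/
theorem stmt_6 (p δ : ℝ) (hp : p ∈ Set.Ioc (0:ℝ) 1) (hδ : δ ∈ Set.Ioo (0:ℝ) 1)
    (phat : ℕ → ℝ) (hphat : ∀ i : ℕ, 1 ≤ i → phat i ∈ Set.Icc (0:ℝ) 1)
    (hconc : ∀ i : ℕ, 1 ≤ i →
      |phat i - p| ≤ Real.sqrt ((4 / 2 ^ i) * Real.log (4 * 2 ^ i / δ))) :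
    (∃ i : ℕ, 1 ≤ i ∧
        Real.sqrt ((4 / 2 ^ i) * Real.log (4 * 2 ^ i / δ)) ≤ phat i / 3) ∧
    (∀ i : ℕ, 1 ≤ i →
        Real.sqrt ((4 / 2 ^ i) * Real.log (4 * 2 ^ i / δ)) ≤ phat i / 3 →
        2 * phat i / 3 ≤ p ∧ p ≤ 2 * (2 * phat i / 3)) :=
  stmt_6_general p δ hp phat hconc
end

section
/- Let a, a', b, b', c be nonnegative real numbers such that a ≤ a' + √(a'·c) + c, b' ≤ b + √(b·c) + c, and a' ≤ b'. Then a ≤ 6·(b + c). -/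
/-!
By AM–GM, `√(x c) ≤ (x + c) / 2`, so each hypothesis of the shape `u ≤ v + √(v c) + c` yields
`u ≤ 3/2 (v + c)`. Chaining the two through `a' ≤ b'` gives `a ≤ 9/4 b + 15/4 c ≤ 6 (b + c)`.
-/

lemma Real.sqrt_mul_le_half_add {x y : ℝ} (hx : 0 ≤ x) (hy : 0 ≤ y) :
    √(x * y) ≤ (x + y) / 2 := by
  rw [Real.sqrt_le_iff]
  constructor
  · positivity
  · nlinarith [four_mul_le_sq_add x y]

lemma le_three_halves_mul_add_of_le_add_sqrt_mul_add {u v c : ℝ} (hv : 0 ≤ v) (hc : 0 ≤ c)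
    (h : u ≤ v + √(v * c) + c) : u ≤ 3 / 2 * (v + c) := by
  linarith [Real.sqrt_mul_le_half_add hv hc]

theorem stmt_10_general (a a' b b' c : ℝ) (ha' : 0 ≤ a') (hb : 0 ≤ b)
    (hc : 0 ≤ c)
    (h1 : a ≤ a' + Real.sqrt (a' * c) + c)
    (h2 : b' ≤ b + Real.sqrt (b * c) + c)
    (h3 : a' ≤ b') :
    a ≤ 6 * (b + c) := by
  have hb'_le := le_three_halves_mul_add_of_le_add_sqrt_mul_add hb hc h2
  calc a ≤ 3 / 2 * (a' + c) := le_three_halves_mul_add_of_le_add_sqrt_mul_add ha' hc h1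
    _ ≤ 3 / 2 * (3 / 2 * (b + c) + c) := by gcongr; linarith
    _ ≤ 6 * (b + c) := by linarith

/-- If `a ≤ a' + √(a'c) + c`, `b' ≤ b + √(bc) + c`, and `a' ≤ b'` for nonnegative
reals, then `a ≤ 6(b + c)`. -/
theorem stmt_10 (a a' b b' c : ℝ) (ha : 0 ≤ a) (ha' : 0 ≤ a') (hb : 0 ≤ b)
    (hb' : 0 ≤ b') (hc : 0 ≤ c)
    (h1 : a ≤ a' + Real.sqrt (a' * c) + c)
    (h2 : b' ≤ b + Real.sqrt (b * c) + c)
    (h3 : a' ≤ b') :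
    a ≤ 6 * (b + c) :=
  stmt_10_general a a' b b' c ha' hb hc h1 h2 h3
end

section
/- For every measurable classifier h on X and every measurable classifier h' on X satisfying h'(x) = h*(x) for all x ∉ R, it holds that err_O(h) − err_O(h') ≤ err_mix(h) − err_mix(h') + 2η. -/
open MeasureTheory

/-- Error with respect to the oracle labels `y_O` under the joint distribution `Q`
over `(x, y_O, y_W)` (labels encoded as `Bool`, standing for `{-1,+1}`). -/
noncomputable def errO {X : Type*} [MeasurableSpace X]
    (Q : Measure (X × Bool × Bool)) (h : X → Bool) : ℝ :=
  (Q {p | h p.1 ≠ p.2.1}).toReal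

/-- Mixed error: outside `R` the label is inferred to be `h*(x)`; inside `R` the
label comes from `O` when the difference classifier `h^df` predicts `+1` (`true`)
and from `W` when it predicts `-1` (`false`). -/
noncomputable def errMix {X : Type*} [MeasurableSpace X]
    (Q : Measure (X × Bool × Bool)) (R : Set X) (hdf hstar : X → Bool)
    (h : X → Bool) : ℝ :=
  (Q {p | p.1 ∉ R ∧ h p.1 ≠ hstar p.1}).toReal
    + (Q {p | p.1 ∈ R ∧ hdf p.1 = true ∧ h p.1 ≠ p.2.1}).toReal
    + (Q {p | p.1 ∈ R ∧ hdf p.1 = false ∧ h p.1 ≠ p.2.2}).toReal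

/-! On `x ∉ R`, `h'` agrees with `h*`, so there the oracle error of `h` exceeds that of `h'` by
at most `Q(h ≠ h*)`, the first term of `err_mix h`, while the first term of `err_mix h'` vanishes.
On `R ∩ {h^df = +1}` the oracle and mixed errors coincide. On `R ∩ {h^df = -1}`, trading `y_O`
for `y_W` in the error of `h`, and back in that of `h'`, costs at most `Q(y_O ≠ y_W)` ≤ `η` each. -/

section

variable {α : Type*} [MeasurableSpace α] (μ : Measure α) [IsFiniteMeasure μ]

theorem measureReal_le_add_of_subset_union {s t u : Set α} (h : s ⊆ t ∪ u) :
    μ.real s ≤ μ.real t + μ.real u :=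
  (measureReal_mono h).trans (measureReal_union_le t u)

theorem measureReal_eq_sdiff_add_inter_add_inter_sdiff (s : Set α) {t u : Set α}
    (ht : MeasurableSet t) (hu : MeasurableSet u) :
    μ.real s = μ.real (s \ t) + μ.real (s ∩ t ∩ u) + μ.real ((s ∩ t) \ u) := by
  rw [add_assoc, measureReal_inter_add_sdiff hu, measureReal_sdiff_add_inter ht]

end

theorem errO_eq_add_add {X : Type*} [MeasurableSpace X] (Q : Measure (X × Bool × Bool))
    [IsFiniteMeasure Q] {R : Set X} (hR : MeasurableSet R) {hdf : X → Bool}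
    (hdfm : Measurable hdf) (h : X → Bool) :
    errO Q h = Q.real {p | p.1 ∉ R ∧ h p.1 ≠ p.2.1}
      + Q.real {p | p.1 ∈ R ∧ hdf p.1 = true ∧ h p.1 ≠ p.2.1}
      + Q.real {p | p.1 ∈ R ∧ hdf p.1 = false ∧ h p.1 ≠ p.2.1} := by
  rw [errO, ← measureReal_def, measureReal_eq_sdiff_add_inter_add_inter_sdiff Q _
    (measurable_fst hR) (hdfm.comp measurable_fst (measurableSet_singleton true))]
  congr 3 <;> ext p <;> simp only [Set.mem_sdiff, Set.mem_inter_iff, Set.mem_ofPred_eq,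
    Set.mem_preimage, Function.comp_apply, Set.mem_singleton_iff, Bool.not_eq_true] <;> tauto

theorem stmt_12_general {X : Type*} [MeasurableSpace X]
    (Q : Measure (X × Bool × Bool)) [IsProbabilityMeasure Q]
    (R : Set X) (hR : MeasurableSet R)
    (hdf hstar : X → Bool) (hdfm : Measurable hdf)
    (η : ℝ)
    (hfn : (Q {p | p.1 ∈ R ∧ hdf p.1 = false ∧ p.2.1 ≠ p.2.2}).toReal ≤ η)
    (h h' : X → Bool)
    (hagree : ∀ x ∉ R, h' x = hstar x) :
    errO Q h - errO Q h' ≤ errMix Q R hdf hstar h - errMix Q R hdf hstar h' + 2 * η := by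
  have outside_R : Q.real {p | p.1 ∉ R ∧ h p.1 ≠ p.2.1}
      ≤ Q.real {p | p.1 ∉ R ∧ h' p.1 ≠ p.2.1} + Q.real {p | p.1 ∉ R ∧ h p.1 ≠ hstar p.1} :=
    measureReal_le_add_of_subset_union Q fun p ⟨hpR, hne⟩ => by
      rcases eq_or_ne (h p.1) (hstar p.1) with hh | hh
      · exact Or.inl ⟨hpR, hagree p.1 hpR ▸ hh ▸ hne⟩
      · exact Or.inr ⟨hpR, hh⟩
  have swap_to_W : Q.real {p | p.1 ∈ R ∧ hdf p.1 = false ∧ h p.1 ≠ p.2.1}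
      ≤ Q.real {p | p.1 ∈ R ∧ hdf p.1 = false ∧ p.2.1 ≠ p.2.2}
        + Q.real {p | p.1 ∈ R ∧ hdf p.1 = false ∧ h p.1 ≠ p.2.2} :=
    measureReal_le_add_of_subset_union Q fun p ⟨hpR, hpdf, hne⟩ => by
      rcases eq_or_ne p.2.1 p.2.2 with hy | hy
      · exact Or.inr ⟨hpR, hpdf, hy ▸ hne⟩
      · exact Or.inl ⟨hpR, hpdf, hy⟩
  have swap_to_O : Q.real {p | p.1 ∈ R ∧ hdf p.1 = false ∧ h' p.1 ≠ p.2.2}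
      ≤ Q.real {p | p.1 ∈ R ∧ hdf p.1 = false ∧ p.2.1 ≠ p.2.2}
        + Q.real {p | p.1 ∈ R ∧ hdf p.1 = false ∧ h' p.1 ≠ p.2.1} :=
    measureReal_le_add_of_subset_union Q fun p ⟨hpR, hpdf, hne⟩ => by
      rcases eq_or_ne p.2.1 p.2.2 with hy | hy
      · exact Or.inr ⟨hpR, hpdf, hy ▸ hne⟩
      · exact Or.inl ⟨hpR, hpdf, hy⟩
  have agree_outside_R : {p : X × Bool × Bool | p.1 ∉ R ∧ h' p.1 ≠ hstar p.1} = ∅ :=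
    Set.eq_empty_of_forall_notMem fun p ⟨hpR, hne⟩ => hne (hagree p.1 hpR)
  rw [errO_eq_add_add Q hR hdfm h, errO_eq_add_add Q hR hdfm h']
  simp only [errMix, ← measureReal_def, agree_outside_R, measureReal_empty] at hfn ⊢
  linarith

/-- Approximate favorable bias of the mixed labels: for any classifier `h` and any
classifier `h'` agreeing with `h*` outside `R`, the gap in oracle errors exceeds the
gap in mixed errors by at most `2η`, where `η` bounds the false-negative mass of the
difference classifier on `R`. -/
theorem stmt_12 {X : Type*} [MeasurableSpace X]
    (Q : Measure (X × Bool × Bool)) [IsProbabilityMeasure Q]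
    (R : Set X) (hR : MeasurableSet R)
    (hdf hstar : X → Bool) (hdfm : Measurable hdf) (hstarm : Measurable hstar)
    (η : ℝ) (hη : 0 ≤ η)
    (hfn : (Q {p | p.1 ∈ R ∧ hdf p.1 = false ∧ p.2.1 ≠ p.2.2}).toReal ≤ η)
    (h h' : X → Bool) (hm : Measurable h) (h'm : Measurable h')
    (hagree : ∀ x ∉ R, h' x = hstar x) :
    errO Q h - errO Q h' ≤ errMix Q R hdf hstar h - errMix Q R hdf hstar h' + 2 * η :=
  stmt_12_general Q R hR hdf hstar hdfm η hfn h h' hagree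
end
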